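/- arXiv:2307.04727 — 4 statements merged into one kernel-verified Lean document; each statement's English description precedes it below -/
import Mathlib

section
/- Let α ∈ (0,1] and let M be a random variable on nonnegative integers with E[1/(M+1)] = α. Then E[M] ≥ 2u - u(u+1)α, where u = ⌊1/α⌋. -/
/-- If `M` is a random variable on ℕ with PMF `p` and `E[1/(M+1)] = α` for `α ∈ (0,1]`,
then `E[M] ≥ 2u - u(u+1)α` where `u = ⌊1/α⌋`. -/
theorem stmt0 (α : ℝ) (hα0 : 0 < α) (hα1 : α ≤ 1)
    (p : ℕ → ℝ) (hp : ∀ m, 0 ≤ p m)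
    (hsum : Summable p) (htot : ∑' m : ℕ, p m = 1)
    (hinv : ∑' m : ℕ, p m / ((m : ℝ) + 1) = α)
    (hEM : Summable (fun m : ℕ => (m : ℝ) * p m)) :
    ∑' m : ℕ, (m : ℝ) * p m ≥
      2 * (⌊1 / α⌋₊ : ℝ) - (⌊1 / α⌋₊ : ℝ) * ((⌊1 / α⌋₊ : ℝ) + 1) * α := by
  set n : ℕ := ⌊1 / α⌋₊ with hn
  set u : ℝ := (n : ℝ) with hu
  -- summability of p m / (m+1)
  have hsum1 : Summable (fun m : ℕ => p m / ((m : ℝ) + 1)) := by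
    apply Summable.of_nonneg_of_le (fun m => div_nonneg (hp m) (by positivity)) _ hsum
    intro m
    exact div_le_self (hp m) (by linarith [Nat.cast_nonneg (α := ℝ) m])
  -- the lower-bound function and its sum
  have hg : Summable (fun m : ℕ => 2 * u * p m - u * (u + 1) * (p m / ((m:ℝ)+1))) :=
    ((hsum.mul_left (2*u)).sub (hsum1.mul_left (u*(u+1))))
  have hgsum : ∑' m : ℕ, (2 * u * p m - u * (u + 1) * (p m / ((m:ℝ)+1)))
      = 2 * u - u * (u + 1) * α := by
    rw [Summable.tsum_sub (hsum.mul_left (2*u)) (hsum1.mul_left (u*(u+1))),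
      tsum_mul_left, tsum_mul_left, htot, hinv, mul_one]
  -- pointwise bound
  have key : ∀ m : ℕ, 2 * u * p m - u * (u + 1) * (p m / ((m:ℝ)+1)) ≤ (m : ℝ) * p m := by
    intro m
    have hm1 : (0:ℝ) < (m : ℝ) + 1 := by positivity
    have hb : 2 * u - u * (u + 1) / ((m:ℝ)+1) ≤ (m : ℝ) := by
      rw [sub_le_iff_le_add, ← sub_le_iff_le_add', le_div_iff₀ hm1]
      -- (m−u)(m−u+1) ≥ 0 for integer-valued reals
      rcases le_or_gt (n : ℕ) m with h | h
      · have : u ≤ (m : ℝ) := by exact_mod_cast Nat.cast_le.mpr h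
        nlinarith
      · have : (m : ℝ) + 1 ≤ u := by exact_mod_cast Nat.cast_le.mpr h
        nlinarith
    calc 2 * u * p m - u * (u + 1) * (p m / ((m:ℝ)+1))
        = (2 * u - u * (u + 1) / ((m:ℝ)+1)) * p m := by ring
      _ ≤ (m : ℝ) * p m := mul_le_mul_of_nonneg_right hb (hp m)
  have := Summable.tsum_le_tsum key hg hEM
  rw [hgsum] at this
  linarith
end

section
/- Let α ∈ (0,1] and u = ⌊1/α⌋. The PMF supported on {u-1, u} with p_u = (u+1)(1-uα) and p_{u-1} = u((u+1)α - 1) is a valid probability distribution (nonnegative, sums to 1), satisfies E[1/(M+1)] = α, and achieves E[M] = 2u - u(u+1)α. -/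
/-- The PMF supported on `{u-1, u}` with `p_u = (u+1)(1-uα)` and `p_{u-1} = u((u+1)α-1)`,
where `u = ⌊1/α⌋`, is a valid PMF, has `E[1/(M+1)] = α`, and `E[M] = 2u - u(u+1)α`. -/
theorem stmt1 (α : ℝ) (hα0 : 0 < α) (hα1 : α ≤ 1) :
    let u : ℕ := ⌊1 / α⌋₊
    let p : ℕ → ℝ := fun m =>
      if m = u then ((u : ℝ) + 1) * (1 - (u : ℝ) * α)
      else if m = u - 1 then (u : ℝ) * (((u : ℝ) + 1) * α - 1)
      else 0
    (∀ m, 0 ≤ p m) ∧ (∑' m : ℕ, p m = 1) ∧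
    (∑' m : ℕ, p m / ((m : ℝ) + 1) = α) ∧
    (∑' m : ℕ, (m : ℝ) * p m = 2 * (u : ℝ) - (u : ℝ) * ((u : ℝ) + 1) * α) := by
  intro u p
  have hu1 : 1 ≤ u := by
    apply Nat.le_floor
    rw [Nat.cast_one, le_div_iff₀ hα0]; linarith
  have huα : (u : ℝ) * α ≤ 1 := by
    have h := Nat.floor_le (by positivity : (0:ℝ) ≤ 1 / α)
    calc (u : ℝ) * α ≤ (1 / α) * α := by
          exact mul_le_mul_of_nonneg_right h hα0.le
      _ = 1 := by field_simp
  have huα2 : 1 < ((u : ℝ) + 1) * α := by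
    have h := Nat.lt_floor_add_one (1 / α)
    have := (div_lt_iff₀ hα0).mp h
    linarith
  have hupos : (0:ℝ) < u := by exact_mod_cast hu1
  have hne : u - 1 ≠ u := by omega
  have hcast : ((u - 1 : ℕ) : ℝ) = (u : ℝ) - 1 := by
    have : (u : ℝ) ≥ 1 := by exact_mod_cast hu1
    push_cast [hu1]; ring
  have hsupp : ∀ (f : ℕ → ℝ → ℝ), (∀ m, f m 0 = 0) →
      ∑' m : ℕ, f m (p m) = f u (p u) + f (u-1) (p (u-1)) := by
    intro f hf0
    rw [tsum_eq_sum (s := {u, u-1}) ?_]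
    · rw [Finset.sum_insert (by simp [hne.symm]), Finset.sum_singleton]
    · intro m hm
      simp only [Finset.mem_insert, Finset.mem_singleton, not_or] at hm
      have : p m = 0 := by simp only [p, if_neg hm.1, if_neg hm.2]
      rw [this, hf0]
  have hpu : p u = ((u : ℝ) + 1) * (1 - (u : ℝ) * α) := by simp [p]
  have hpu1 : p (u - 1) = (u : ℝ) * (((u : ℝ) + 1) * α - 1) := by
    simp [p, hne]
  refine ⟨?_, ?_, ?_, ?_⟩
  · intro m
    simp only [p]
    split_ifs with h1 h2
    · nlinarith
    · nlinarith
    · exact le_refl 0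
  · rw [hsupp (fun m x => x) (fun m => rfl), hpu, hpu1]; ring
  · rw [hsupp (fun m x => x / ((m:ℝ)+1)) (fun m => by simp), hpu, hpu1, hcast]
    have h1 : (u : ℝ) - 1 + 1 = (u : ℝ) := by ring
    rw [h1]
    field_simp
    ring
  · rw [hsupp (fun m x => (m:ℝ) * x) (fun m => by simp), hpu, hpu1, hcast]
    ring
end

section
/- The minimum of E[M] over all PMFs (p_m)_{m≥0} on the nonnegative integers satisfying Σ_m p_m/(m+1) = α equals 2u - u(u+1)α, where u = ⌊1/α⌋, for any α ∈ (0,1]. -/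
lemma twoPointAux (v : ℕ) (f : ℕ → ℝ) (h : ∀ m, m ≠ v → m ≠ v + 1 → f m = 0) :
    Summable f ∧ ∑' m, f m = f v + f (v + 1) := by
  have hz : ∀ m ∉ ({v, v + 1} : Finset ℕ), f m = 0 := by
    intro m hm
    simp only [Finset.mem_insert, Finset.mem_singleton, not_or] at hm
    exact h m hm.1 hm.2
  refine ⟨summable_of_ne_finset_zero hz, ?_⟩
  rw [tsum_eq_sum hz, Finset.sum_insert (by simp only [Finset.mem_singleton]; omega),
    Finset.sum_singleton]

/-- The minimum of `E[M]` over all PMFs on ℕ with `E[1/(M+1)] = α`, for `α ∈ (0,1]`,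
equals `2u - u(u+1)α` where `u = ⌊1/α⌋`. -/
theorem stmt2 (α : ℝ) (hα0 : 0 < α) (hα1 : α ≤ 1) :
    IsLeast {E : ℝ | ∃ p : ℕ → ℝ, (∀ m, 0 ≤ p m) ∧ Summable p ∧
        (∑' m : ℕ, p m = 1) ∧ (∑' m : ℕ, p m / ((m : ℝ) + 1) = α) ∧
        Summable (fun m : ℕ => (m : ℝ) * p m) ∧ E = ∑' m : ℕ, (m : ℝ) * p m}
      (2 * (⌊1 / α⌋₊ : ℝ) - (⌊1 / α⌋₊ : ℝ) * ((⌊1 / α⌋₊ : ℝ) + 1) * α) := by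
  set u := ⌊1 / α⌋₊ with hu
  have h1α : (1 : ℝ) ≤ 1 / α := one_le_one_div hα0 hα1
  have hu1 : 1 ≤ u := Nat.le_floor (by exact_mod_cast h1α)
  have hfl : (u : ℝ) ≤ 1 / α := Nat.floor_le (by positivity)
  have hfu : 1 / α < (u : ℝ) + 1 := Nat.lt_floor_add_one _
  have huα : (u : ℝ) * α ≤ 1 := (le_div_iff₀ hα0).mp hfl
  have h1uα : 1 < ((u : ℝ) + 1) * α := (div_lt_iff₀ hα0).mp hfu
  clear_value u
  obtain ⟨v, hv⟩ : ∃ v, u = v + 1 := ⟨u - 1, (Nat.succ_pred_eq_of_pos hu1).symm⟩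
  subst hv
  have hcast : ((v + 1 : ℕ) : ℝ) = (v : ℝ) + 1 := by push_cast; ring
  rw [hcast] at huα h1uα ⊢
  have hV0 : (0 : ℝ) ≤ (v : ℝ) := Nat.cast_nonneg v
  set V : ℝ := (v : ℝ) with hV
  constructor
  · -- membership: the two-point distribution on {v, v+1}
    set A : ℝ := (V + 1) * (V + 2) * α - (V + 1) with hA
    set B : ℝ := (V + 2) - (V + 1) * (V + 2) * α with hB
    have hA0 : 0 ≤ A := by nlinarith
    have hB0 : 0 ≤ B := by nlinarith
    set p : ℕ → ℝ := fun m => if m = v then A else if m = v + 1 then B else 0 with hp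
    have hpv : p v = A := by simp [hp]
    have hpv1 : p (v + 1) = B := by
      simp [hp]
    have h1 := twoPointAux v p (by intro m h1 h2; simp [hp, h1, h2])
    have h2 := twoPointAux v (fun m => p m / ((m : ℝ) + 1))
      (by intro m h1 h2; simp [hp, h1, h2])
    have h3 := twoPointAux v (fun m => (m : ℝ) * p m)
      (by intro m h1 h2; simp [hp, h1, h2])
    refine ⟨p, ?_, h1.1, ?_, ?_, h3.1, ?_⟩
    · intro m
      simp only [hp]
      split_ifs <;> [exact hA0; exact hB0; exact le_rfl]
    · rw [h1.2, hpv, hpv1]; simp only [hA, hB]; ring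
    · rw [h2.2]
      simp only [hpv, hpv1, hcast]
      have h1 : V + 1 ≠ 0 := by positivity
      have h2 : V + 1 + 1 ≠ 0 := by positivity
      field_simp
      simp only [hA, hB]
      ring
    · rw [h3.2]
      simp only [hpv, hpv1, hcast, hA, hB]
      ring
  · -- lower bound
    rintro E ⟨p, hp0, hps, hp1, hpα, hpE, rfl⟩
    have hq : Summable (fun m : ℕ => p m / ((m : ℝ) + 1)) :=
      hps.of_nonneg_of_le (fun m => div_nonneg (hp0 m) (by positivity))
        (fun m => div_le_self (hp0 m) (by exact_mod_cast Nat.one_le_cast.mpr (Nat.le_add_left 1 m)))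
    have hf : Summable (fun m : ℕ =>
        2 * (V + 1) * p m - (V + 1) * (V + 2) * (p m / ((m : ℝ) + 1))) :=
      (hps.mul_left _).sub (hq.mul_left _)
    have hpt : ∀ m : ℕ,
        2 * (V + 1) * p m - (V + 1) * (V + 2) * (p m / ((m : ℝ) + 1)) ≤ (m : ℝ) * p m := by
      intro m
      have hm1 : (0 : ℝ) < (m : ℝ) + 1 := by positivity
      have key : 0 ≤ ((m : ℝ) - (V + 1)) * ((m : ℝ) - V) := by
        rcases le_or_gt (v + 1) m with h | h
        · have h1 : (V + 1) ≤ (m : ℝ) := by rw [hV]; exact_mod_cast h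
          nlinarith
        · have h1 : (m : ℝ) ≤ V := by rw [hV]; exact_mod_cast Nat.lt_succ_iff.mp h
          nlinarith
      have hq0 : 0 ≤ p m / ((m : ℝ) + 1) := div_nonneg (hp0 m) (by positivity)
      have hEq : p m = p m / ((m : ℝ) + 1) * ((m : ℝ) + 1) :=
        (div_mul_cancel₀ _ hm1.ne').symm
      set q : ℝ := p m / ((m : ℝ) + 1) with hqdef
      rw [hEq]
      nlinarith [mul_nonneg hq0 key]
    have hle := Summable.tsum_le_tsum hpt hf hpE
    have heq : ∑' m : ℕ, (2 * (V + 1) * p m - (V + 1) * (V + 2) * (p m / ((m : ℝ) + 1)))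
        = 2 * (V + 1) - (V + 1) * (V + 2) * α := by
      rw [Summable.tsum_sub (hps.mul_left _) (hq.mul_left _), tsum_mul_left, tsum_mul_left, hp1, hpα]
      ring
    rw [heq] at hle
    calc 2 * (V + 1) - (V + 1) * ((V + 1) + 1) * α
        = 2 * (V + 1) - (V + 1) * (V + 2) * α := by ring
      _ ≤ ∑' m : ℕ, (m : ℝ) * p m := hle
end

section
/- For N ≥ 2, K ≥ 2, and any d with 0 ≤ d < (K-1)(N-1)/(K(N^K - N)), the value ε = ln((dKN + (K-1)(N-1))/(dKN + (K-1)(N-1) - dKN^K)) is well-defined (the argument of ln is positive), is nonnegative, and satisfies (K-1)(N-1)(e^ε - 1)/(K(N + (N^K - N)e^ε)) = d. -/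
open Real in
/-- For `0 ≤ d < (K-1)(N-1)/(K(N^K - N))`, the value
`ε = ln((dKN + (K-1)(N-1))/(dKN + (K-1)(N-1) - dKN^K))` is well-defined,
nonnegative, and satisfies `D(ε) = d`. -/
theorem stmt8 (N K : ℕ) (hN : 2 ≤ N) (hK : 2 ≤ K) (d : ℝ) (hd0 : 0 ≤ d)
    (hd : d < ((K : ℝ) - 1) * ((N : ℝ) - 1) / ((K : ℝ) * ((N : ℝ) ^ K - (N : ℝ)))) :
    let A : ℝ := d * K * N + ((K : ℝ) - 1) * ((N : ℝ) - 1)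
    let B : ℝ := d * K * N + ((K : ℝ) - 1) * ((N : ℝ) - 1) - d * K * (N : ℝ) ^ K
    let ε : ℝ := Real.log (A / B)
    0 < A / B ∧ 0 ≤ ε ∧
      ((K : ℝ) - 1) * ((N : ℝ) - 1) * (exp ε - 1)
        / ((K : ℝ) * ((N : ℝ) + ((N : ℝ) ^ K - (N : ℝ)) * exp ε)) = d := by
  intro A B ε
  have hN1 : (2 : ℝ) ≤ (N : ℝ) := by exact_mod_cast hN
  have hK1 : (2 : ℝ) ≤ (K : ℝ) := by exact_mod_cast hK
  have hNK : (N : ℝ) ^ 2 ≤ (N : ℝ) ^ K := by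
    apply pow_le_pow_right₀ (by linarith) hK
  have hNKN : (N : ℝ) < (N : ℝ) ^ K := by nlinarith
  have hKpos : (0 : ℝ) < K := by linarith
  have hden : (0 : ℝ) < (K : ℝ) * ((N : ℝ) ^ K - (N : ℝ)) := by
    apply mul_pos hKpos; linarith
  have hdlt : d * ((K : ℝ) * ((N : ℝ) ^ K - (N : ℝ))) < ((K : ℝ) - 1) * ((N : ℝ) - 1) := by
    have := (lt_div_iff₀ hden).mp hd
    linarith
  have hB : 0 < B := by
    simp only [B]
    nlinarith
  have hA : 0 < A := by
    simp only [A, B] at *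
    nlinarith [mul_nonneg (mul_nonneg hd0 hKpos.le) (pow_nonneg (by linarith : (0:ℝ) ≤ (N:ℝ)) K)]
  have hBA : B ≤ A := by
    simp only [A, B]
    nlinarith [mul_nonneg (mul_nonneg hd0 hKpos.le) (pow_nonneg (by linarith : (0:ℝ) ≤ (N:ℝ)) K)]
  have hABpos : 0 < A / B := div_pos hA hB
  have h1 : (1 : ℝ) ≤ A / B := (one_le_div hB).mpr hBA
  refine ⟨hABpos, Real.log_nonneg h1, ?_⟩
  have hexp : Real.exp ε = A / B := Real.exp_log hABpos
  rw [hexp]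
  have hc : (0 : ℝ) < ((K : ℝ) - 1) * ((N : ℝ) - 1) := by nlinarith
  have hNKpos : (0 : ℝ) < (N : ℝ) ^ K := by positivity
  have hdenom : (K : ℝ) * ((N : ℝ) + ((N : ℝ) ^ K - (N : ℝ)) * (A / B)) ≠ 0 := by
    have : (0:ℝ) < (N : ℝ) + ((N : ℝ) ^ K - (N : ℝ)) * (A / B) := by
      have h2 : 0 ≤ ((N : ℝ) ^ K - (N : ℝ)) * (A / B) :=
        mul_nonneg (by linarith) hABpos.le
      linarith
    positivity
  rw [div_eq_iff hdenom]
  have hBne : B ≠ 0 := hB.ne'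
  field_simp
  simp only [A, B]
  ring
end
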